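/- arXiv:1104.5406 — 2 statements merged into one kernel-verified Lean document; each statement's English description precedes it below -/
import Mathlib

section
/- Let G be a countably-based locally compact Hausdorff unimodular group with Haar measure dg, and let ‖·‖ : G → ℝ be a gauge: a continuous function with ‖e‖ = 1, ‖g‖ ≥ 1, ‖g⁻¹‖ = ‖g‖, ‖gh‖ ≤ ‖g‖·‖h‖, and such that ∫_G ‖g‖^{-σ} dg < ∞ for all σ > σ₀. Then for any discrete subgroup Γ ⊂ G and any σ > σ₀, the sum ∑_{γ ∈ Γ} ‖γ‖^{-σ} converges. -/
/-!
Discreteness of `Γ` gives a neighbourhood `V` of `1` whose `Γ`-translates are pairwise disjoint;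
shrinking it, `N ≤ C` on `V`. For `x ∈ γ • V` submultiplicativity gives `N x ≤ C · N γ`, hence
`N γ ^ (-σ) ≤ C ^ σ · N x ^ (-σ)`. Integrating over the disjoint translates, which all have
measure `μ V > 0` by left invariance, yields `μ V · ∑ γ, N γ ^ (-σ) ≤ C ^ σ · ∫ N ^ (-σ) < ∞`.
-/

open MeasureTheory Topology Pointwise Filter Function
open scoped ENNReal

@[to_additive]
theorem Subgroup.exists_mem_nhds_one_pairwise_disjoint_smul {G : Type*} [Group G]
    [TopologicalSpace G] [IsTopologicalGroup G] (Γ : Subgroup G) [DiscreteTopology Γ] :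
    ∃ V ∈ 𝓝 (1 : G), Pairwise (Disjoint on fun γ : Γ => (γ : G) • V) := by
  obtain ⟨U, hU, hUΓ⟩ := (mem_nhds_subtype _ 1 {1}).mp ((isOpen_discrete {(1 : Γ)}).mem_nhds rfl)
  have hdiv : Tendsto (fun p : G × G => p.1 / p.2) (𝓝 1 ×ˢ 𝓝 1) (𝓝 1) := by
    simpa [← nhds_prod_eq] using continuous_div'.tendsto ((1 : G), (1 : G))
  obtain ⟨V, hV, hVU⟩ := mem_prod_self_iff.mp (hdiv hU)
  refine ⟨V, hV, fun γ₁ γ₂ hne => Set.disjoint_left.mpr fun x hx₁ hx₂ => hne ?_⟩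
  rw [Set.mem_smul_set_iff_inv_smul_mem] at hx₁ hx₂
  have hmem : ((γ₂⁻¹ * γ₁ : Γ) : G) ∈ U := by
    convert hVU (Set.mk_mem_prod hx₂ hx₁) using 1
    simp [div_eq_mul_inv, mul_assoc]
  exact (inv_mul_eq_one.mp (hUΓ hmem)).symm

theorem tsum_mul_measure_le_lintegral_of_pairwise_disjoint {α ι : Type*} [MeasurableSpace α]
    (μ : Measure α) {s : ι → Set α} (hs : ∀ i, MeasurableSet (s i))
    (hdisj : Pairwise (Disjoint on s)) {a : ι → ℝ≥0∞} {F : α → ℝ≥0∞}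
    (hle : ∀ i, ∀ x ∈ s i, a i ≤ F x) :
    ∑' i, a i * μ (s i) ≤ ∫⁻ x, F x ∂μ :=
  calc ∑' i, a i * μ (s i) ≤ ∑' i, μ.withDensity F (s i) := by
        refine ENNReal.tsum_le_tsum fun i => ?_
        rw [← setLIntegral_const, withDensity_apply _ (hs i)]
        exact setLIntegral_mono' (hs i) (hle i)
    _ ≤ μ.withDensity F Set.univ :=
        (tsum_meas_le_meas_iUnion_of_disjoint _ hs hdisj).trans (measure_mono (Set.subset_univ _))
    _ = ∫⁻ x, F x ∂μ := by rw [withDensity_apply _ MeasurableSet.univ, Measure.restrict_univ]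

theorem summable_of_le_integrable_of_pairwise_disjoint {α ι : Type*} [MeasurableSpace α]
    {μ : Measure α} {s : ι → Set α} (hs : ∀ i, MeasurableSet (s i))
    (hdisj : Pairwise (Disjoint on s)) {c : ℝ≥0∞} (hc : c ≠ 0) (hμs : ∀ i, c ≤ μ (s i))
    {f : ι → ℝ} (hf : ∀ i, 0 ≤ f i) {F : α → ℝ} (hF : Integrable F μ)
    (hle : ∀ i, ∀ x ∈ s i, f i ≤ F x) : Summable f := by
  have hbound : (∑' i, ENNReal.ofReal (f i)) * c ≤ ∫⁻ x, ENNReal.ofReal (F x) ∂μ :=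
    calc (∑' i, ENNReal.ofReal (f i)) * c ≤ ∑' i, ENNReal.ofReal (f i) * μ (s i) := by
          rw [← ENNReal.tsum_mul_right]
          exact ENNReal.tsum_le_tsum fun i => mul_le_mul_right (hμs i) _
      _ ≤ ∫⁻ x, ENNReal.ofReal (F x) ∂μ :=
          tsum_mul_measure_le_lintegral_of_pairwise_disjoint μ hs hdisj
            fun i x hx => ENNReal.ofReal_le_ofReal (hle i x hx)
  have hfin : ∑' i, ENNReal.ofReal (f i) ≠ ∞ := by
    intro htop
    rw [htop, ENNReal.top_mul hc, top_le_iff] at hbound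
    exact hF.lintegral_lt_top.ne hbound
  simpa [ENNReal.toReal_ofReal (hf _)] using ENNReal.summable_toReal hfin

theorem rpow_neg_le_mul_rpow_neg_of_mem_smul {G : Type*} [Group G] {N : G → ℝ}
    (hNpos : ∀ g, 0 < N g) (hNsub : ∀ g h, N (g * h) ≤ N g * N h) {V : Set G} {C σ : ℝ}
    (hC : ∀ v ∈ V, N v ≤ C) (hσ : 0 ≤ σ) {g x : G} (hx : x ∈ g • V) :
    N g ^ (-σ) ≤ C ^ σ * N x ^ (-σ) := by
  rw [Set.mem_smul_set_iff_inv_smul_mem, smul_eq_mul] at hx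
  have hC0 : 0 < C := (hNpos _).trans_le (hC _ hx)
  have hNx : N x ≤ N g * C :=
    calc N x = N (g * (g⁻¹ * x)) := by rw [mul_inv_cancel_left]
      _ ≤ N g * N (g⁻¹ * x) := hNsub _ _
      _ ≤ N g * C := by gcongr; exacts [(hNpos g).le, hC _ hx]
  calc N g ^ (-σ) = C ^ σ * (N g * C) ^ (-σ) := by
        rw [Real.mul_rpow (hNpos g).le hC0.le, Real.rpow_neg hC0.le, mul_left_comm,
          mul_inv_cancel₀ (Real.rpow_pos_of_pos hC0 σ).ne', mul_one]
    _ ≤ C ^ σ * N x ^ (-σ) :=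
        mul_le_mul_of_nonneg_left
          (Real.rpow_le_rpow_of_nonpos (hNpos x) hNx (neg_nonpos.mpr hσ)) (by positivity)

theorem gauge_sum_over_discrete_subgroup_summable_general
    {G : Type*} [Group G] [TopologicalSpace G] [IsTopologicalGroup G]
    [MeasurableSpace G] [BorelSpace G]
    (μ : Measure G) [μ.IsHaarMeasure]
    (N : G → ℝ) (hNcont : Continuous N)
    (hNge : ∀ g, 1 ≤ N g)
    (hNsub : ∀ g h, N (g * h) ≤ N g * N h)
    (σ₀ : ℝ) (hσ₀ : 0 < σ₀)
    (hint : ∀ σ : ℝ, σ₀ < σ → Integrable (fun g => (N g) ^ (-σ)) μ)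
    (Γ : Subgroup G) (hΓ : DiscreteTopology Γ)
    (σ : ℝ) (hσ : σ₀ < σ) :
    Summable (fun γ : Γ => (N (γ : G)) ^ (-σ)) := by
  obtain ⟨V₀, hV₀, hdisj₀⟩ := Γ.exists_mem_nhds_one_pairwise_disjoint_smul
  set V := interior (V₀ ∩ N ⁻¹' Set.Iic (N 1 + 1))
  have hV : V ∈ 𝓝 (1 : G) := interior_mem_nhds.mpr <| inter_mem hV₀ <|
    hNcont.continuousAt.preimage_mem_nhds (Iic_mem_nhds (lt_add_one _))
  have hVsub : V ⊆ V₀ ∩ N ⁻¹' Set.Iic (N 1 + 1) := interior_subset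
  have hVV₀ : ∀ g : G, g • V ⊆ g • V₀ := fun _ =>
    Set.smul_set_mono (hVsub.trans Set.inter_subset_left)
  have hdisj : Pairwise (Disjoint on fun γ : Γ => (γ : G) • V) :=
    hdisj₀.mono fun _ _ h => h.mono (hVV₀ _) (hVV₀ _)
  have hNpos : ∀ g, 0 < N g := fun g => zero_lt_one.trans_le (hNge g)
  refine summable_of_le_integrable_of_pairwise_disjoint
    (fun γ => (isOpen_interior.smul _).measurableSet) hdisj (μ.measure_pos_of_mem_nhds hV).ne'
    (fun γ => (measure_smul μ _ V).ge) (fun γ => (Real.rpow_pos_of_pos (hNpos _) _).le)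
    ((hint σ hσ).const_mul ((N 1 + 1) ^ σ)) fun γ x hx => ?_
  exact rpow_neg_le_mul_rpow_neg_of_mem_smul hNpos hNsub (fun v hv => (hVsub hv).2)
    (hσ₀.trans hσ).le hx

/-- for a gauge ‖·‖ on a locally compact Hausdorff unimodular group `G`
with Haar measure, and a discrete subgroup `Γ`, the series `∑_{γ ∈ Γ} ‖γ‖^{-σ}`
converges for every `σ > σ₀`. -/
theorem gauge_sum_over_discrete_subgroup_summable
    {G : Type*} [Group G] [TopologicalSpace G] [IsTopologicalGroup G]
    [LocallyCompactSpace G] [T2Space G] [SecondCountableTopology G]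
    [MeasurableSpace G] [BorelSpace G]
    (μ : Measure G) [μ.IsHaarMeasure] [μ.IsMulRightInvariant]
    (N : G → ℝ) (hNcont : Continuous N)
    (hN1 : N 1 = 1) (hNge : ∀ g, 1 ≤ N g) (hNinv : ∀ g, N g⁻¹ = N g)
    (hNsub : ∀ g h, N (g * h) ≤ N g * N h)
    (σ₀ : ℝ) (hσ₀ : 0 < σ₀)
    (hint : ∀ σ : ℝ, σ₀ < σ → Integrable (fun g => (N g) ^ (-σ)) μ)
    (Γ : Subgroup G) (hΓ : DiscreteTopology Γ)
    (σ : ℝ) (hσ : σ₀ < σ) :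
    Summable (fun γ : Γ => (N (γ : G)) ^ (-σ)) :=
  gauge_sum_over_discrete_subgroup_summable_general μ N hNcont hNge hNsub σ₀ hσ₀ hint Γ hΓ σ hσ
end

section
/- (Perron-type contour integral, main term) For real θ > 0, σ > 0, integer ℓ ≥ 1, and X > 0, the absolutely convergent contour integral (1/2πi) ∫_{σ - i∞}^{σ + i∞} e^{sX} / (s(s+θ)(s+2θ)⋯(s+ℓθ)) ds equals (1 - e^{-θX})^ℓ / (ℓ! · θ^ℓ). -/
/-!
With `x = e^{-X}`, the integrand is `x^{-s}` times the Mellin transform of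
`f u = (1 - u^θ)^ℓ` on `(0, 1]`, divided by `ℓ! θ^ℓ`. Since multiplying by `u^θ` shifts the
Mellin variable by `θ`, the identity `(1 - u^θ)^(ℓ+1) = (1 - u^θ)^ℓ - u^θ (1 - u^θ)^ℓ` gives by
induction `mellin f s = ℓ! θ^ℓ / (s (s + θ) ⋯ (s + ℓθ))`. For `ℓ ≥ 1` this decays like `|s|^{-2}` on
vertical lines, so Mellin inversion applies at the continuity point `x ∈ (0, 1)` and returns
`f x = (1 - e^{-θX})^ℓ`.
-/

open MeasureTheory Complex
open Set Filter Nat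

theorem prod_add_nat_mul_ne_zero {s θ : ℂ} (hs : 0 < s.re) (hθ : 0 ≤ θ.re) (n : ℕ) :
    ∏ m ∈ Finset.range n, (s + m * θ) ≠ 0 :=
  Finset.prod_ne_zero_iff.2 fun m _ h => by
    have := congrArg re h
    simp only [add_re, mul_re, natCast_re, natCast_im, zero_mul, sub_zero, zero_re] at this
    nlinarith [Nat.cast_nonneg (α := ℝ) m]

theorem factorial_mul_pow_div_prod_sub_shift {K : Type*} [Field K] {s θ : K} {ℓ : ℕ}
    (h : ∏ m ∈ Finset.range (ℓ + 2), (s + m * θ) ≠ 0) :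
    ℓ ! * θ ^ ℓ / ∏ m ∈ Finset.range (ℓ + 1), (s + m * θ) -
        ℓ ! * θ ^ ℓ / ∏ m ∈ Finset.range (ℓ + 1), (s + θ + m * θ) =
      (ℓ + 1)! * θ ^ (ℓ + 1) / ∏ m ∈ Finset.range (ℓ + 2), (s + m * θ) := by
  have hlast : ∏ m ∈ Finset.range (ℓ + 2), (s + m * θ) =
      (∏ m ∈ Finset.range (ℓ + 1), (s + m * θ)) * (s + (ℓ + 1 : ℕ) * θ) :=
    Finset.prod_range_succ _ _
  have hfirst : ∏ m ∈ Finset.range (ℓ + 2), (s + m * θ) =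
      s * ∏ m ∈ Finset.range (ℓ + 1), (s + θ + m * θ) := by
    rw [Finset.prod_range_succ', mul_comm]
    push_cast
    simp only [add_mul, one_mul, add_assoc, add_comm θ, zero_mul, add_zero]
  have hP : ∏ m ∈ Finset.range (ℓ + 1), (s + m * θ) ≠ 0 := fun h0 => h (by rw [hlast, h0, zero_mul])
  have hQ : ∏ m ∈ Finset.range (ℓ + 1), (s + θ + m * θ) ≠ 0 := fun h0 =>
    h (by rw [hfirst, h0, mul_zero])
  rw [div_sub_div _ _ hP hQ, div_eq_div_iff (mul_ne_zero hP hQ) h]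
  push_cast [factorial_succ] at hlast ⊢
  linear_combination (ℓ ! * θ ^ ℓ : K) *
    ((∏ m ∈ Finset.range (ℓ + 1), (s + θ + m * θ)) * hlast -
      (∏ m ∈ Finset.range (ℓ + 1), (s + m * θ)) * hfirst)

theorem hasMellin_indicator_one_sub_cpow_pow {θ : ℂ} (hθ : 0 ≤ θ.re) (ℓ : ℕ) {s : ℂ}
    (hs : 0 < s.re) :
    HasMellin ((Ioc 0 1).indicator fun t : ℝ => (1 - (t : ℂ) ^ θ) ^ ℓ) s
      (ℓ ! * θ ^ ℓ / ∏ m ∈ Finset.range (ℓ + 1), (s + m * θ)) := by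
  induction ℓ generalizing s with
  | zero => simpa using hasMellin_one_Ioc hs
  | succ ℓ ih =>
    have hsθ : 0 < (s + θ).re := by rw [add_re]; linarith
    have hsplit : ((Ioc 0 1).indicator fun t : ℝ => (1 - (t : ℂ) ^ θ) ^ (ℓ + 1)) =
        fun t => (Ioc 0 1).indicator (fun t : ℝ => (1 - (t : ℂ) ^ θ) ^ ℓ) t -
          (t : ℂ) ^ θ • (Ioc 0 1).indicator (fun t : ℝ => (1 - (t : ℂ) ^ θ) ^ ℓ) t := by
      ext t
      by_cases ht : t ∈ Ioc 0 1
      · simp only [indicator_of_mem ht, smul_eq_mul]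
        ring
      · simp [indicator_of_notMem ht]
    obtain ⟨hconv, hval⟩ := hasMellin_sub (ih hs).1 (MellinConvergent.cpow_smul.2 (ih hsθ).1)
    rw [← hsplit] at hconv hval
    refine ⟨hconv, ?_⟩
    rw [hval, mellin_cpow_smul, (ih hs).2, (ih hsθ).2]
    exact factorial_mul_pow_div_prod_sub_shift (prod_add_nat_mul_ne_zero hs hθ _)

theorem continuousAt_indicator_one_sub_cpow_pow (θ : ℂ) (ℓ : ℕ) {x : ℝ} (hx : x ∈ Ioo 0 1) :
    ContinuousAt ((Ioc 0 1).indicator fun t : ℝ => (1 - (t : ℂ) ^ θ) ^ ℓ) x := by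
  refine ContinuousAt.congr_of_eventuallyEq ?_ (eventually_of_mem (isOpen_Ioo.mem_nhds hx)
    fun y hy => indicator_of_mem (Ioo_subset_Ioc_self hy) _)
  exact (continuousAt_const.sub (continuous_ofReal.continuousAt.cpow continuousAt_const
    (ofReal_mem_slitPlane.2 hx.1))).pow ℓ

theorem norm_le_norm_add_ofReal {z : ℂ} (hz : 0 ≤ z.re) {x : ℝ} (hx : 0 ≤ x) :
    ‖z‖ ≤ ‖z + x‖ := by
  rw [norm_def, norm_def]
  gcongr
  simp only [normSq_apply, add_re, ofReal_re, add_im, ofReal_im, add_zero]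
  nlinarith

theorem pow_le_norm_prod_add_nat_mul {z : ℂ} (hz : 0 ≤ z.re) {θ : ℝ} (hθ : 0 ≤ θ) (n : ℕ) :
    ‖z‖ ^ n ≤ ‖∏ m ∈ Finset.range n, (z + m * θ)‖ :=
  calc ‖z‖ ^ n = ∏ _m ∈ Finset.range n, ‖z‖ := by simp
    _ ≤ ∏ m ∈ Finset.range n, ‖z + m * θ‖ :=
      Finset.prod_le_prod (fun _ _ => norm_nonneg z) fun m _ => by
        exact_mod_cast norm_le_norm_add_ofReal hz (mul_nonneg m.cast_nonneg hθ)
    _ = ‖∏ m ∈ Finset.range n, (z + m * θ)‖ := (norm_prod _ _).symm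

theorem integrable_inv_sq_add_sq {σ : ℝ} (hσ : σ ≠ 0) :
    Integrable fun t : ℝ => (σ ^ 2 + t ^ 2)⁻¹ := by
  refine ((integrable_inv_one_add_sq.comp_div hσ).const_mul (σ ^ 2)⁻¹).congr
    (ae_of_all _ fun t => ?_)
  field_simp

theorem verticalIntegrable_inv_prod_add_nat_mul {σ θ : ℝ} (hσ : 0 < σ) (hθ : 0 ≤ θ) {ℓ : ℕ}
    (hℓ : 1 ≤ ℓ) :
    VerticalIntegrable (fun s => (∏ m ∈ Finset.range (ℓ + 1), (s + m * θ))⁻¹) σ := by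
  have hre (t : ℝ) : 0 < (σ + t * I).re := by simpa using hσ
  have hθ' : 0 ≤ (θ : ℂ).re := by simpa using hθ
  refine ((integrable_inv_sq_add_sq hσ.ne').const_mul (σ ^ (ℓ - 1))⁻¹).mono' ?_
    (ae_of_all _ fun t => ?_)
  · exact ((by fun_prop : Continuous fun t : ℝ => ∏ m ∈ Finset.range (ℓ + 1),
      ((σ + t * I : ℂ) + m * θ)).inv₀
        fun t => prod_add_nat_mul_ne_zero (hre t) hθ' _).aestronglyMeasurable
  · set z : ℂ := σ + t * I
    have hsq : ‖z‖ ^ 2 = σ ^ 2 + t ^ 2 := by rw [Complex.sq_norm, normSq_add_mul_I]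
    have hσz : σ ≤ ‖z‖ := by simpa [z] using re_le_norm z
    have key : σ ^ (ℓ - 1) * (σ ^ 2 + t ^ 2) ≤ ‖∏ m ∈ Finset.range (ℓ + 1), (z + m * θ)‖ :=
      calc σ ^ (ℓ - 1) * (σ ^ 2 + t ^ 2) ≤ ‖z‖ ^ (ℓ - 1) * ‖z‖ ^ 2 := by
            rw [hsq]; gcongr
        _ = ‖z‖ ^ (ℓ + 1) := by rw [← pow_add]; congr 1; omega
        _ ≤ _ := pow_le_norm_prod_add_nat_mul (hre t).le hθ _
    rw [norm_inv, ← mul_inv]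
    exact inv_anti₀ (by positivity) key

theorem ofReal_exp_cpow (a : ℝ) (z : ℂ) : (Real.exp a : ℂ) ^ z = cexp (a * z) := by
  rw [cpow_def_of_ne_zero (ofReal_ne_zero.2 (Real.exp_pos a).ne'),
    ← ofReal_log (Real.exp_pos a).le, Real.log_exp]

theorem mellinInv_exp_neg (σ X : ℝ) (F : ℂ → ℂ) :
    mellinInv σ F (Real.exp (-X)) =
      1 / (2 * Real.pi) * ∫ t : ℝ, cexp ((σ + t * I) * X) * F (σ + t * I) := by
  simp_rw [mellinInv, ofReal_exp_cpow, smul_eq_mul, Complex.real_smul, ofReal_neg, neg_mul_neg,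
    mul_comm (X : ℂ)]
  push_cast
  rfl

/-- Perron-type contour integral, main term.  For `θ, σ, X > 0` and `ℓ ≥ 1`,
`(1/2πi) ∫_{σ-i∞}^{σ+i∞} e^{sX} / (s(s+θ)⋯(s+ℓθ)) ds = (1 - e^{-θX})^ℓ/(ℓ! θ^ℓ)`,
the integral converging absolutely.  Parametrizing `s = σ + it`, `ds = i dt`, the
integral is `(1/2π) ∫_ℝ`. -/
theorem perron_integral_main_term
    (θ σ X : ℝ) (hθ : 0 < θ) (hσ : 0 < σ) (hX : 0 < X) (ℓ : ℕ) (hℓ : 1 ≤ ℓ) :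
    Integrable (fun t : ℝ =>
      Complex.exp ((σ + t * I) * X) /
        ∏ m ∈ Finset.range (ℓ + 1), (σ + t * I + m * θ)) ∧
    (1 / (2 * Real.pi) : ℂ) *
        ∫ t : ℝ, Complex.exp ((σ + t * I) * X) /
          ∏ m ∈ Finset.range (ℓ + 1), (σ + t * I + m * θ) =
      ((1 - Real.exp (-θ * X)) ^ ℓ / (ℓ.factorial * θ ^ ℓ) : ℝ) := by
  set f := (Ioc 0 1).indicator fun t : ℝ => (1 - (t : ℂ) ^ (θ : ℂ)) ^ ℓ with hf
  set K : ℂ := ℓ ! * θ ^ ℓ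
  have hK : K ≠ 0 := mul_ne_zero (by exact_mod_cast ℓ.factorial_ne_zero)
    (pow_ne_zero _ (ofReal_ne_zero.2 hθ.ne'))
  have hmellin (t : ℝ) : HasMellin f (σ + t * I)
      (K / ∏ m ∈ Finset.range (ℓ + 1), (σ + t * I + m * θ)) :=
    hasMellin_indicator_one_sub_cpow_pow (by simpa using hθ.le) ℓ (by simpa using hσ)
  have hvert := verticalIntegrable_inv_prod_add_nat_mul hσ hθ.le hℓ
  have hx : Real.exp (-X) ∈ Ioo 0 1 := ⟨Real.exp_pos _, Real.exp_lt_one_iff.2 (by linarith)⟩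
  have hinv : 1 / (2 * Real.pi) * ∫ t : ℝ, cexp ((σ + t * I) * X) * mellin f (σ + t * I) =
      (1 - cexp (-θ * X)) ^ ℓ := by
    have hmellin_vert : VerticalIntegrable (mellin f) σ := (hvert.const_mul K).congr
      (ae_of_all _ fun t => by simp only [(hmellin t).2, div_eq_mul_inv])
    rw [← mellinInv_exp_neg, mellinInv_mellin_eq σ f hx.1 (by simpa using (hmellin 0).1)
      hmellin_vert (continuousAt_indicator_one_sub_cpow_pow _ ℓ hx), hf,
      indicator_of_mem (Ioo_subset_Ioc_self hx), ofReal_exp_cpow, ofReal_neg, neg_mul, neg_mul,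
      mul_comm]
  have hintegrand (t : ℝ) :
      cexp ((σ + t * I) * X) / ∏ m ∈ Finset.range (ℓ + 1), (σ + t * I + m * θ) =
        K⁻¹ * (cexp ((σ + t * I) * X) * mellin f (σ + t * I)) := by
    rw [(hmellin t).2, mul_div_left_comm, inv_mul_cancel_left₀ hK]
  refine ⟨?_, ?_⟩
  · simp_rw [div_eq_mul_inv]
    refine hvert.bdd_mul (c := Real.exp (σ * X)) (by fun_prop : Continuous _).aestronglyMeasurable
      (ae_of_all _ fun t => ?_)
    simp [norm_exp]
  · simp_rw [hintegrand]
    rw [integral_const_mul, mul_left_comm, hinv]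
    push_cast
    ring
end
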